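/- Let R : ℝ² → ℝ be a smooth, radially symmetric, rapidly decaying function. Then ∫_{ℝ²} (Δ³(R²))·R·(R + ρ ∂_ρ R) dξ = −2 ∫_{ℝ²} |∇Δ(R²)|² dξ. In particular this integral is nonpositive. -/

import Mathlib

/-!
Write `u = R²` and `w = Δu`. Since `R (R + ρ ∂_ρ R) = u + ½ ξ·∇u`, the integral is
`∫ Δ²w · u + ½ ∫ Δ²w · (ξ·∇u)`. Moving the Laplacians across, the first term is the Dirichlet
form `∫ Δw · w = -∫ |∇w|²`, and the commutator `Δ(ξ·∇u) = 2Δu + ξ·∇Δu` turns the second into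
`∫ Δw · w + ½ ∫ Δw · (ξ·∇w)`. The last integral is the Rellich–Pohozaev term
`(n - 2)/2 ∫ |∇w|²` in dimension `n`, which vanishes for `n = 2`.
-/

open MeasureTheory Set

noncomputable section

abbrev E2 : Type := EuclideanSpace ℝ (Fin 2)

/-- The Laplacian on `ℝ²`, as the trace of the second derivative. -/
def lap {F : Type*} [NormedAddCommGroup F] [NormedSpace ℝ F] (f : E2 → F) (x : E2) : F :=
  ∑ i : Fin 2, iteratedFDeriv ℝ 2 f x ![EuclideanSpace.single i 1, EuclideanSpace.single i 1]

open LineDeriv Laplacian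
open scoped RealInnerProductSpace

namespace SchwartzMap

section Euler

variable {E F : Type*} [NormedAddCommGroup E] [NormedSpace ℝ E]
  [NormedAddCommGroup F] [NormedSpace ℝ F]

theorem isSymmSndFDerivAt (f : 𝓢(E, F)) (x : E) : IsSymmSndFDerivAt ℝ f x :=
  (f.smooth ⊤).contDiffAt.isSymmSndFDerivAt <| by
    simp only [minSmoothness_of_isRCLikeNormedField]; exact WithTop.coe_le_coe.2 le_top

theorem differentiableAt_fderiv (f : 𝓢(E, F)) (x : E) : DifferentiableAt ℝ (fderiv ℝ f) x :=
  (fderivCLM ℝ E F f).differentiableAt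

/-- The Euler operator `ρ ∂_ρ = x · ∇`. -/
def euler : 𝓢(E, F) →L[ℝ] 𝓢(E, F) :=
  bilinLeftCLM (ContinuousLinearMap.id ℝ (E →L[ℝ] F))
    (ContinuousLinearMap.id ℝ E).hasTemperateGrowth ∘L fderivCLM ℝ E F

theorem euler_apply (f : 𝓢(E, F)) (x : E) : euler f x = fderiv ℝ f x x := rfl

theorem lineDerivOp_euler (f : 𝓢(E, F)) (v : E) :
    ∂_{v} (euler f) = ∂_{v} f + euler (∂_{v} f) := by
  ext x
  change fderiv ℝ (fun y => fderiv ℝ f y y) x v =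
    fderiv ℝ f x v + fderiv ℝ (fun y => fderiv ℝ f y v) x x
  rw [fderiv_clm_apply (f.differentiableAt_fderiv x) differentiableAt_fun_id,
    fderiv_clm_apply (f.differentiableAt_fderiv x) (differentiableAt_const _)]
  simp [f.isSymmSndFDerivAt x v x]

theorem euler_mul_self_apply (f : 𝓢(E, ℝ)) (x : E) :
    euler (pairing (ContinuousLinearMap.mul ℝ ℝ) f f) x = 2 * (f x * euler f x) := by
  change fderiv ℝ (fun y => f y * f y) x x = _
  rw [fderiv_fun_mul f.differentiableAt f.differentiableAt, euler_apply]
  simp only [add_apply, smul_apply, smul_eq_mul]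
  ring

end Euler

variable {E : Type*} [NormedAddCommGroup E] [InnerProductSpace ℝ E]

section InnerProductSpace

variable {F : Type*} [NormedAddCommGroup F] [NormedSpace ℝ F]

theorem euler_apply_eq_sum {ι : Type*} [Fintype ι] (b : OrthonormalBasis ι ℝ E) (f : 𝓢(E, F))
    (x : E) : euler f x = ∑ i, ⟪b i, x⟫ • ∂_{b i} f x := by
  rw [euler_apply]
  nth_rewrite 2 [← b.sum_repr' x]
  simp [lineDerivOp_apply_eq_fderiv]

theorem norm_gradient_sq_eq_sum [CompleteSpace E] {ι : Type*} [Fintype ι]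
    (b : OrthonormalBasis ι ℝ E) (f : E → ℝ) (x : E) :
    ‖gradient f x‖ ^ 2 = ∑ i, fderiv ℝ f x (b i) ^ 2 := by
  simp [← b.sum_sq_inner_right, inner_gradient_right]

variable [FiniteDimensional ℝ E]

theorem laplacian_euler (f : 𝓢(E, F)) : Δ (euler f) = (2 : ℝ) • Δ f + euler (Δ f) := by
  simp only [laplacian_eq_sum (stdOrthonormalBasis ℝ E), lineDerivOp_euler, lineDerivOp_add,
    map_sum, Finset.smul_sum, ← Finset.sum_add_distrib]
  refine Finset.sum_congr rfl fun i _ => ?_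
  rw [two_smul, add_assoc]

variable [MeasurableSpace E] [BorelSpace E] {μ : Measure E} [μ.IsAddHaarMeasure]

theorem integrable_inner_smul (f : 𝓢(E, F)) (u : E) : Integrable (fun x => ⟪u, x⟫ • f x) μ := by
  have := (smulLeftCLM F (innerSL ℝ u) f).integrable (μ := μ)
  rw [smulLeftCLM_apply (innerSL ℝ u).hasTemperateGrowth] at this
  simpa using this

theorem integral_inner_smul_lineDerivOp (f : 𝓢(E, F)) (u v : E) :
    ∫ x, ⟪u, x⟫ • ∂_{v} f x ∂μ = -⟪u, v⟫ • ∫ x, f x ∂μ := by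
  have hlin : ∀ x, fderiv ℝ (⟪u, ·⟫) x = innerSL ℝ u := fun x => (innerSL ℝ u).fderiv
  have := integral_smul_fderiv_eq_neg_fderiv_smul_of_integrable (μ := μ) (v := v)
    (f := (⟪u, ·⟫)) (g := f)
    (by simp only [hlin, innerSL_apply_apply]; exact f.integrable.smul ⟪u, v⟫)
    ((∂_{v} f).integrable_inner_smul u) (f.integrable_inner_smul u)
    (fun x _ => (innerSL ℝ u).differentiableAt) (fun x _ => f.differentiableAt)
  simpa [hlin, integral_smul, lineDerivOp_apply_eq_fderiv] using this

theorem integral_euler (f : 𝓢(E, F)) :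
    ∫ x, euler f x ∂μ = -(Module.finrank ℝ E : ℝ) • ∫ x, f x ∂μ := by
  let b := stdOrthonormalBasis ℝ E
  simp_rw [euler_apply_eq_sum b]
  rw [integral_finsetSum _ fun i _ => (∂_{b i} f).integrable_inner_smul (b i)]
  simp [integral_inner_smul_lineDerivOp, b.orthonormal.1, Finset.sum_neg_distrib,
    Nat.cast_smul_eq_nsmul]

end InnerProductSpace

variable [FiniteDimensional ℝ E] [MeasurableSpace E] [BorelSpace E]
  {μ : Measure E} [μ.IsAddHaarMeasure]

theorem integrable_mul (f g : 𝓢(E, ℝ)) : Integrable (fun x => f x * g x) μ :=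
  (pairing (ContinuousLinearMap.mul ℝ ℝ) f g).integrable

theorem integral_mul_euler_self (f : 𝓢(E, ℝ)) :
    ∫ x, f x * euler f x ∂μ = -(Module.finrank ℝ E / 2 : ℝ) * ∫ x, f x * f x ∂μ := by
  have h := integral_euler (μ := μ) (pairing (ContinuousLinearMap.mul ℝ ℝ) f f)
  simp only [euler_mul_self_apply, integral_const_mul, pairing_apply_apply,
    ContinuousLinearMap.mul_apply', smul_eq_mul] at h
  linarith

theorem integral_norm_gradient_sq_eq_sum {ι : Type*} [Fintype ι] (b : OrthonormalBasis ι ℝ E)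
    (f : 𝓢(E, ℝ)) : ∫ x, ‖gradient f x‖ ^ 2 ∂μ = ∑ i, ∫ x, ∂_{b i} f x * ∂_{b i} f x ∂μ := by
  simp_rw [norm_gradient_sq_eq_sum b, sq]
  exact integral_finsetSum _ fun i _ => integrable_mul (∂_{b i} f) (∂_{b i} f)

theorem integral_laplacian_mul {ι : Type*} [Fintype ι] (b : OrthonormalBasis ι ℝ E)
    (f g : 𝓢(E, ℝ)) :
    ∫ x, Δ f x * g x ∂μ = -∑ i, ∫ x, ∂_{b i} f x * ∂_{b i} g x ∂μ := by
  simp_rw [laplacian_eq_sum b, sum_apply, Finset.sum_mul]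
  rw [integral_finsetSum _ fun i _ => integrable_mul _ _, ← Finset.sum_neg_distrib]
  refine Finset.sum_congr rfl fun i _ => ?_
  calc ∫ x, ∂_{b i} (∂_{b i} f) x * g x ∂μ = ∫ x, g x * ∂_{b i} (∂_{b i} f) x ∂μ := by
        simp_rw [mul_comm]
    _ = -∫ x, ∂_{b i} g x * ∂_{b i} f x ∂μ := integral_mul_lineDerivOp_right_eq_neg_left _ _ _
    _ = _ := by simp_rw [mul_comm]

theorem integral_laplacian_mul_self (f : 𝓢(E, ℝ)) :
    ∫ x, Δ f x * f x ∂μ = -∫ x, ‖gradient f x‖ ^ 2 ∂μ := by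
  rw [integral_laplacian_mul (stdOrthonormalBasis ℝ E),
    integral_norm_gradient_sq_eq_sum (stdOrthonormalBasis ℝ E)]

theorem integral_laplacian_mul_euler (f : 𝓢(E, ℝ)) :
    ∫ x, Δ f x * euler f x ∂μ =
      ((Module.finrank ℝ E - 2) / 2 : ℝ) * ∫ x, ‖gradient f x‖ ^ 2 ∂μ := by
  let b := stdOrthonormalBasis ℝ E
  rw [integral_laplacian_mul b, integral_norm_gradient_sq_eq_sum b, Finset.mul_sum,
    ← Finset.sum_neg_distrib]
  refine Finset.sum_congr rfl fun i _ => ?_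
  simp only [lineDerivOp_euler, add_apply, mul_add]
  rw [integral_add (integrable_mul _ _) (integrable_mul _ _), integral_mul_euler_self]
  ring

theorem integral_laplacian_pow_three_mul_add_half_euler (u : 𝓢(E, ℝ)) :
    ∫ x, Δ (Δ (Δ u)) x * (u x + euler u x / 2) ∂μ =
      ((Module.finrank ℝ E - 10) / 4 : ℝ) *
        ∫ x, ‖gradient ((Δ u : 𝓢(E, ℝ)) : E → ℝ) x‖ ^ 2 ∂μ := by
  set w := Δ u
  have hu : ∫ x, Δ (Δ w) x * u x ∂μ = ∫ x, Δ w x * w x ∂μ :=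
    (integral_mul_laplacian_right_eq_left (Δ w) u).symm
  have heuler : ∫ x, Δ (Δ w) x * euler u x ∂μ =
      2 * ∫ x, Δ w x * w x ∂μ + ∫ x, Δ w x * euler w x ∂μ := by
    rw [← integral_mul_laplacian_right_eq_left, laplacian_euler, ← integral_const_mul,
      ← integral_add ((integrable_mul _ _).const_mul 2) (integrable_mul _ _)]
    simp only [add_apply, smul_apply, smul_eq_mul]
    congr 1 with x
    ring
  have hsplit : ∫ x, Δ (Δ w) x * (u x + euler u x / 2) ∂μ =
      ∫ x, Δ (Δ w) x * u x ∂μ + (∫ x, Δ (Δ w) x * euler u x ∂μ) / 2 := by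
    rw [← integral_div, ← integral_add (integrable_mul _ _) ((integrable_mul _ _).div_const 2)]
    congr 1 with x
    ring
  rw [hsplit, hu, heuler, integral_laplacian_mul_self, integral_laplacian_mul_euler]
  ring

end SchwartzMap

open SchwartzMap

theorem lap_eq_laplacian {F : Type*} [NormedAddCommGroup F] [NormedSpace ℝ F] (f : 𝓢(E2, F)) :
    lap f = Δ f := by
  ext x
  rw [laplacian_apply, InnerProductSpace.laplacian_eq_iteratedFDeriv_orthonormalBasis _
    (EuclideanSpace.basisFun (Fin 2) ℝ)]
  simp [lap, EuclideanSpace.basisFun_apply]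

theorem stmt5_general (R : SchwartzMap E2 ℝ) :
    (∫ ξ : E2, lap (lap (lap (fun x => (R x) ^ 2))) ξ *
        (R ξ * (R ξ + (inner ℝ ξ (gradient (fun x => R x) ξ) : ℝ)))
      = -2 * ∫ ξ : E2, ‖gradient (lap (fun x => (R x) ^ 2)) ξ‖ ^ 2) ∧
    (∫ ξ : E2, lap (lap (lap (fun x => (R x) ^ 2))) ξ *
        (R ξ * (R ξ + (inner ℝ ξ (gradient (fun x => R x) ξ) : ℝ))) ≤ 0) := by
  set u := pairing (ContinuousLinearMap.mul ℝ ℝ) R R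
  have hu : (fun x => R x ^ 2) = u := by ext x; simp [u, sq]
  have hR : ∀ ξ, R ξ * (R ξ + ⟪ξ, gradient R ξ⟫) = u ξ + euler u ξ / 2 := fun ξ => by
    rw [euler_mul_self_apply, euler_apply, inner_gradient_right]
    simp [u]
    ring
  have key : ∫ ξ : E2, lap (lap (lap (fun x => (R x) ^ 2))) ξ *
        (R ξ * (R ξ + ⟪ξ, gradient R ξ⟫)) = -2 * ∫ ξ : E2, ‖gradient (lap u) ξ‖ ^ 2 := by
    simp only [hu, lap_eq_laplacian, hR, integral_laplacian_pow_three_mul_add_half_euler,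
      finrank_euclideanSpace_fin]
    norm_num
  refine ⟨hu ▸ key, key ▸ ?_⟩
  exact mul_nonpos_of_nonpos_of_nonneg (by norm_num) (integral_nonneg fun ξ => by positivity)

/-- For a smooth, radially symmetric, rapidly decaying `R : ℝ² → ℝ`,
`∫ Δ³(R²) · R · (R + ρ ∂_ρ R) dξ = −2 ∫ |∇Δ(R²)|² dξ`; in particular this is nonpositive. -/
theorem stmt5 (R : SchwartzMap E2 ℝ)
    (hrad : ∀ x y : E2, ‖x‖ = ‖y‖ → R x = R y) :
    (∫ ξ : E2, lap (lap (lap (fun x => (R x) ^ 2))) ξ *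
        (R ξ * (R ξ + (inner ℝ ξ (gradient (fun x => R x) ξ) : ℝ)))
      = -2 * ∫ ξ : E2, ‖gradient (lap (fun x => (R x) ^ 2)) ξ‖ ^ 2) ∧
    (∫ ξ : E2, lap (lap (lap (fun x => (R x) ^ 2))) ξ *
        (R ξ * (R ξ + (inner ℝ ξ (gradient (fun x => R x) ξ) : ℝ))) ≤ 0) :=
  stmt5_general R
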